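/- arXiv:1811.03379 — 4 statements merged into one kernel-verified Lean document; each statement's English description precedes it below -/
import Mathlib

section
/- Let u ∈ [0,1/2] and define f : [0,1] → ℝ by f(x) = x for x ∈ [0,(u+1)/2] and f(x) = 1 + u − x for x ∈ [(u+1)/2, 1]. Then f is 1-Lipschitz, satisfies f(x) ≥ ux on [0,1], and T(f) = (1−2u)/3. -/
/-- `a` is a good partition of `[0, A]`: a strictly decreasing positive sequence starting at `A`
and tending to `0`, with `a (n) / a (n+1) ≤ 2`. -/
def IsGoodPartition (A : ℝ) (a : ℕ → ℝ) : Prop :=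
  a 0 = A ∧ StrictAnti a ∧ (∀ n, 0 < a n) ∧
    Filter.Tendsto a Filter.atTop (nhds 0) ∧ ∀ n, a n ≤ 2 * a (n + 1)

/-- The total drop of `f` according to the partition `a`:
`Σ_{n≥1} (f aₙ − min_{[aₙ, aₙ₋₁]} f)`. -/
noncomputable def totalDropAlong (f : ℝ → ℝ) (a : ℕ → ℝ) : ℝ :=
  ∑' n : ℕ, (f (a (n + 1)) - sInf (f '' Set.Icc (a (n + 1)) (a n)))

/-- `T(f)`: the infimum of total drops of `f : [0, A] → ℝ` over good partitions of `[0, A]`. -/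
noncomputable def totalDrop (f : ℝ → ℝ) (A : ℝ) : ℝ :=
  sInf {t : ℝ | ∃ a : ℕ → ℝ, IsGoodPartition A a ∧ t = totalDropAlong f a}

lemma tent_min (u : ℝ) (f : ℝ → ℝ)
    (hfdef : ∀ x : ℝ, f x = if x ≤ (u + 1) / 2 then x else 1 + u - x) :
    ∀ x, f x = min x (1 + u - x) := by
  intro x
  rw [hfdef]
  rcases le_or_gt x ((u + 1) / 2) with h | h
  · rw [if_pos h, min_eq_left (by linarith)]
  · rw [if_neg (not_le.mpr h), min_eq_right (by linarith)]

lemma tent_sInf (u : ℝ) (f : ℝ → ℝ) (hmin : ∀ x, f x = min x (1 + u - x))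
    {p q : ℝ} (hpq : p ≤ q) :
    sInf (f '' Set.Icc p q) = min (f p) (f q) := by
  apply IsLeast.csInf_eq
  constructor
  · rcases min_choice (f p) (f q) with h | h <;> rw [h]
    · exact ⟨p, Set.left_mem_Icc.mpr hpq, rfl⟩
    · exact ⟨q, Set.right_mem_Icc.mpr hpq, rfl⟩
  · rintro y ⟨x, hx, rfl⟩
    have hfp : f p ≤ p := by rw [hmin]; exact min_le_left _ _
    have hfq : f q ≤ 1 + u - q := by rw [hmin]; exact min_le_right _ _
    rw [hmin x]
    refine le_min (le_trans (min_le_left _ _) (hfp.trans hx.1)) ?_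
    exact le_trans (min_le_right _ _) (hfq.trans (by linarith [hx.2]))

lemma tent_drop_lower (u : ℝ) (hu : u ∈ Set.Icc (0 : ℝ) (1 / 2))
    (f : ℝ → ℝ) (hmin : ∀ x, f x = min x (1 + u - x))
    (a : ℕ → ℝ) (ha : IsGoodPartition 1 a) :
    (1 - 2 * u) / 3 ≤ totalDropAlong f a := by
  obtain ⟨ha0, hanti, hpos, htend, hratio⟩ := ha
  obtain ⟨hu0, hu2⟩ := hu
  set c : ℝ := (1 + u) / 3 with hc
  have hcpos : 0 < c := by rw [hc]; linarith
  set g : ℕ → ℝ := fun n => f (a (n + 1)) - sInf (f '' Set.Icc (a (n + 1)) (a n)) with hg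
  have hgeq : ∀ n, g n = f (a (n + 1)) - min (f (a (n + 1))) (f (a n)) := by
    intro n
    rw [hg]
    simp only
    rw [tent_sInf u f hmin (hanti (Nat.lt_succ_self n)).le]
  have hgnonneg : ∀ n, 0 ≤ g n := by
    intro n
    rw [hgeq n]
    have := min_le_left (f (a (n + 1))) (f (a n))
    linarith
  -- eventually terms vanish
  obtain ⟨M, hM⟩ : ∃ M, a M < c := ((htend.eventually (gt_mem_nhds hcpos)).exists)
  have hzero : ∀ n, M ≤ n → g n = 0 := by
    intro n hn
    have han : a n ≤ a M := hanti.antitone hn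
    have han1 : a (n + 1) < a n := hanti (Nat.lt_succ_self n)
    have h1 : f (a n) = a n := by
      rw [hmin, min_eq_left]; linarith
    have h2 : f (a (n + 1)) = a (n + 1) := by
      rw [hmin, min_eq_left]; linarith
    rw [hgeq n, h1, h2, min_eq_left han1.le]
    ring
  have hsummable : Summable g :=
    summable_of_ne_finset_zero (s := Finset.range (M + 1)) (by
      intro n hn
      have : M + 1 ≤ n := by simpa [Finset.mem_range, Nat.lt_succ_iff] using hn
      exact hzero n (by omega))
  -- find N with c ≤ a N ≤ 2c
  have hex : ∃ n, a n ≤ 2 * c := by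
    obtain ⟨n, hn⟩ := (htend.eventually (gt_mem_nhds (by linarith : (0:ℝ) < 2 * c))).exists
    exact ⟨n, hn.le⟩
  set N := Nat.find hex with hN
  have hNle : a N ≤ 2 * c := Nat.find_spec hex
  have hNge : c ≤ a N := by
    by_cases hN0 : N = 0
    · rw [hN0, ha0]; linarith
    · have hk : N - 1 < N := Nat.sub_lt (Nat.pos_of_ne_zero hN0) one_pos
      have h2 : ¬ a (N - 1) ≤ 2 * c := Nat.find_min hex (by rw [← hN]; exact hk)
      have h3 := hratio (N - 1)
      rw [Nat.sub_add_cancel (Nat.one_le_iff_ne_zero.mpr hN0)] at h3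
      have h4 : 2 * c < a (N - 1) := lt_of_not_ge h2
      linarith
  -- partial sum lower bound
  have htsum : ∑ n ∈ Finset.range N, g n ≤ totalDropAlong f a := by
    have : totalDropAlong f a = ∑' n, g n := rfl
    rw [this]
    exact Summable.sum_le_tsum (Finset.range N) (fun i _ => hgnonneg i) hsummable
  have htele : f (a N) - f (a 0) ≤ ∑ n ∈ Finset.range N, g n := by
    rw [← Finset.sum_range_sub (fun n => f (a n)) N]
    apply Finset.sum_le_sum
    intro i _
    rw [hgeq i]
    have := min_le_right (f (a (i + 1))) (f (a i))
    linarith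
  have hfa0 : f (a 0) = u := by
    rw [ha0, hmin, min_eq_right] <;> linarith
  have hfaN : c ≤ f (a N) := by
    rw [hmin]
    exact le_min hNge (by linarith)
  calc (1 - 2 * u) / 3 = c - u := by rw [hc]; ring
    _ ≤ f (a N) - f (a 0) := by rw [hfa0]; linarith
    _ ≤ ∑ n ∈ Finset.range N, g n := htele
    _ ≤ totalDropAlong f a := htsum

lemma tent_drop_witness (u : ℝ) (hu : u ∈ Set.Icc (0 : ℝ) (1 / 2))
    (f : ℝ → ℝ) (hmin : ∀ x, f x = min x (1 + u - x)) :
    ∃ a : ℕ → ℝ, IsGoodPartition 1 a ∧ totalDropAlong f a = (1 - 2 * u) / 3 := by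
  obtain ⟨hu0, hu2⟩ := hu
  rcases eq_or_lt_of_le hu2 with heq | hlt
  · -- u = 1/2 : use a n = (1/2)^n
    set a : ℕ → ℝ := fun n => (1 / 2 : ℝ) ^ n with ha
    have hanti : StrictAnti a :=
      fun m n h => pow_lt_pow_right_of_lt_one₀ (by norm_num) (by norm_num) h
    refine ⟨a, ⟨by rw [ha]; norm_num, hanti, fun n => by rw [ha]; positivity,
      tendsto_pow_atTop_nhds_zero_of_lt_one (by norm_num) (by norm_num), ?_⟩, ?_⟩
    · intro n
      show (1/2:ℝ) ^ n ≤ 2 * (1/2:ℝ) ^ (n + 1)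
      rw [pow_succ]
      linarith [pow_nonneg (by norm_num : (0:ℝ) ≤ 1/2) n]
    · have hterm : ∀ n : ℕ,
          f (a (n + 1)) - sInf (f '' Set.Icc (a (n + 1)) (a n)) = 0 := by
        intro n
        have hlt' : a (n + 1) < a n := hanti (Nat.lt_succ_self n)
        rw [tent_sInf u f hmin hlt'.le]
        have hle1 : a (n + 1) ≤ 1/2 := by
          rw [ha]
          calc ((1:ℝ)/2) ^ (n + 1) ≤ (1/2:ℝ) ^ 1 :=
            pow_le_pow_of_le_one (by norm_num) (by norm_num) (by omega)
          _ = 1/2 := pow_one _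
        have hle0 : a n ≤ 1 := pow_le_one₀ (by norm_num) (by norm_num)
        have hle0' : 0 < a n := by rw [ha]; positivity
        have h1 : f (a (n + 1)) = a (n + 1) := by
          rw [hmin, min_eq_left]; linarith
        have h2 : f (a (n + 1)) ≤ f (a n) := by
          rw [h1, hmin]
          refine le_min hlt'.le ?_
          linarith
        rw [min_eq_left h2]
        ring
      unfold totalDropAlong
      rw [show (fun n : ℕ => f (a (n + 1)) - sInf (f '' Set.Icc (a (n + 1)) (a n)))
          = fun _ => (0:ℝ) from funext hterm, tsum_zero]
      rw [heq]; norm_num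
  · -- u < 1/2 : use a n = min 1 (K * (1/2)^n), K = 4(1+u)/3
    set K : ℝ := 4 * (1 + u) / 3 with hK
    have hK1 : 1 < K := by rw [hK]; linarith
    have hK2 : K < 2 := by rw [hK]; linarith
    set a : ℕ → ℝ := fun n => min 1 (K * (1 / 2) ^ n) with ha
    have ha0 : a 0 = 1 := by rw [ha]; simp; linarith
    have hapos : ∀ n, 0 < a n := by
      intro n; rw [ha]; simp only [lt_min_iff]; constructor
      · norm_num
      · positivity
    have han : ∀ n, 1 ≤ n → a n = K * (1 / 2) ^ n := by
      intro n hn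
      rw [ha]
      simp only
      rw [min_eq_right]
      calc K * (1/2:ℝ) ^ n ≤ K * (1/2) ^ 1 := by
            apply mul_le_mul_of_nonneg_left _ (by linarith)
            exact pow_le_pow_of_le_one (by norm_num) (by norm_num) hn
        _ = K / 2 := by ring
        _ ≤ 1 := by linarith
    have hanti : StrictAnti a := by
      apply strictAnti_nat_of_succ_lt
      intro n
      cases' Nat.eq_zero_or_pos n with h h
      · subst h
        rw [ha0, han 1 le_rfl]
        rw [pow_one]; linarith
      · rw [han n h, han (n + 1) (by omega)]
        apply mul_lt_mul_of_pos_left _ (by linarith)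
        exact pow_lt_pow_right_of_lt_one₀ (by norm_num) (by norm_num) (Nat.lt_succ_self n)
    have htend : Filter.Tendsto a Filter.atTop (nhds 0) := by
      have h1 : Filter.Tendsto (fun n : ℕ => K * (1 / 2 : ℝ) ^ n) Filter.atTop (nhds 0) := by
        have := tendsto_pow_atTop_nhds_zero_of_lt_one (by norm_num : (0:ℝ) ≤ 1/2) (by norm_num : (1:ℝ)/2 < 1)
        simpa using this.const_mul K
      apply squeeze_zero (fun n => (hapos n).le) (fun n => min_le_right _ _) h1
    have hratio : ∀ n, a n ≤ 2 * a (n + 1) := by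
      intro n
      cases' Nat.eq_zero_or_pos n with h h
      · subst h
        rw [ha0, han 1 le_rfl, pow_one]
        linarith
      · rw [han n h, han (n + 1) (by omega), pow_succ]
        ring_nf
        linarith [hapos 0]
    refine ⟨a, ⟨ha0, hanti, hapos, htend, hratio⟩, ?_⟩
    set c : ℝ := (1 + u) / 3 with hc
    have hterm : ∀ n : ℕ, n ≠ 0 → f (a (n + 1)) - sInf (f '' Set.Icc (a (n + 1)) (a n)) = 0 := by
      intro n hn
      have h1 : 1 ≤ n := Nat.one_le_iff_ne_zero.mpr hn
      rw [tent_sInf u f hmin (hanti (Nat.lt_succ_self n)).le]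
      have hub : a n ≤ 2 * c := by
        rw [han n h1]
        calc K * (1/2:ℝ) ^ n ≤ K * (1/2) ^ 1 := by
              apply mul_le_mul_of_nonneg_left _ (by linarith)
              exact pow_le_pow_of_le_one (by norm_num) (by norm_num) h1
          _ = K / 2 := by ring
          _ = 2 * c := by rw [hK, hc]; ring
      have hub1 : a (n + 1) ≤ c := by
        rw [han (n + 1) (by omega), pow_succ]
        have : K * (1/2:ℝ) ^ n ≤ 2 * c := by rw [← han n h1]; exact hub
        rw [show K * ((1/2:ℝ) ^ n * (1/2)) = K * (1/2)^n * (1/2) by ring]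
        linarith
      have h2 : f (a (n + 1)) = a (n + 1) := by
        rw [hmin, min_eq_left]
        have := hapos n
        have := hanti (Nat.lt_succ_self n)
        rw [hc] at hub1
        linarith
      have h3 : a (n + 1) ≤ f (a n) := by
        rw [hmin]
        refine le_min (hanti (Nat.lt_succ_self n)).le ?_
        rw [hc] at hub1 hub
        linarith
      rw [h2, min_eq_left h3]
      ring
    have hsum : Summable (fun n : ℕ => f (a (n + 1)) - sInf (f '' Set.Icc (a (n + 1)) (a n))) :=
      summable_of_ne_finset_zero (s := {0}) (fun n hn => hterm n (by simpa using hn))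
    unfold totalDropAlong
    rw [tsum_eq_single 0 (fun n hn => hterm n hn)]
    -- compute term 0
    have ha1 : a 1 = 2 * c := by rw [han 1 le_rfl, pow_one, hK, hc]; ring
    rw [tent_sInf u f hmin (by rw [ha0, ha1, hc]; linarith : a 1 ≤ a 0)]
    have hf1 : f (a 0) = u := by
      rw [ha0, hmin, min_eq_right] <;> linarith
    have hf2 : f (a 1) = c := by
      rw [ha1, hmin, min_eq_right] <;> (rw [hc]; try linarith)
    rw [hf1, hf2, min_eq_right (by rw [hc]; linarith)]
    rw [hc]; ring

/-- The extremal example: the tent function `f(x) = min(x, 1+u-x)` is 1-Lipschitz on `[0,1]`,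
satisfies `f(x) ≥ u x` there, and has total drop exactly `(1-2u)/3`. -/
theorem totalDrop_tent (u : ℝ) (hu : u ∈ Set.Icc (0 : ℝ) (1 / 2))
    (f : ℝ → ℝ) (hfdef : ∀ x : ℝ, f x = if x ≤ (u + 1) / 2 then x else 1 + u - x) :
    LipschitzOnWith 1 f (Set.Icc 0 1) ∧ (∀ x ∈ Set.Icc (0 : ℝ) 1, u * x ≤ f x) ∧
      totalDrop f 1 = (1 - 2 * u) / 3 := by
  have hmin := tent_min u f hfdef
  obtain ⟨hu0, hu2⟩ := hu
  refine ⟨?_, ?_, ?_⟩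
  · have hfe : f = fun x => min x (1 + u - x) := funext hmin
    rw [hfe]
    have h1 : LipschitzWith 1 (fun x : ℝ => x) := LipschitzWith.id
    have h2 : LipschitzWith 1 (fun x : ℝ => 1 + u - x) := by
      have := (LipschitzWith.const' (1 + u) (K := 0)).sub LipschitzWith.id
      simpa using this
    have h3 := h1.min h2
    rw [sup_idem] at h3
    exact h3.lipschitzOnWith
  · intro x hx
    rw [hmin]
    refine le_min ?_ ?_
    · nlinarith [hx.1, hx.2]
    · nlinarith [hx.1, hx.2]
  · unfold totalDrop
    obtain ⟨a, hgood, hval⟩ := tent_drop_witness u ⟨hu0, hu2⟩ f hmin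
    apply le_antisymm
    · exact csInf_le ⟨(1 - 2 * u) / 3, fun t ⟨b, hb, hbt⟩ => by
        rw [hbt]; exact tent_drop_lower u ⟨hu0, hu2⟩ f hmin b hb⟩
        ⟨a, hgood, hval.symm⟩
    · exact le_csInf ⟨_, a, hgood, hval.symm⟩ (fun t ⟨b, hb, hbt⟩ => by
        rw [hbt]; exact tent_drop_lower u ⟨hu0, hu2⟩ f hmin b hb)
end

section
/- Let s ∈ (1,2]. There exist constants c = c(s) > 0 and C = C(s) > 0 such that for every L ≥ 1 and every Borel probability measure ρ on [0,1)² satisfying ρ(B(x,r)) ≤ L·r^s for all x ∈ ℝ² and r > 0, there exist axis-parallel squares Q, Q₁, Q₂ ⊆ ℝ² with Q₁ ⊆ Q, Q₂ ⊆ Q, ρ(Q₁) ≥ L^{−C}, ρ(Q₂) ≥ L^{−C}, and dist(Q₁, Q₂) ≥ c·λ(Q), where λ(Q) denotes the side length of Q. -/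
/-!
A grid of side `4⁻ⁿ ≈ 1 / L` on the unit square contains, by pigeonhole, a square `Q₁` of mass
`≥ 16⁻ⁿ`. Around its centre `x` the balls `B(x, 2·4⁻ʲ)`, `j = 0, …, n`, decrease from full mass to
mass `≤ 1/4` (Frostman), so one of the `n` annuli `B(x, 2r) \ B(x, r/2)` carries mass `≳ 1/n`, and a
grid of side `r/32` covering it contains a square `Q₂` of mass `≳ 1/n`. Both lie in the square of
side `4r` centred at `x`, and `Q₂` is at distance `≳ r` from `Q₁` because `Q₁` has side `≤ r/4`.
Finally `n ≲ L`, and the Frostman condition forces `L ≥ 4/3`, so all these masses are `≥ L⁻¹⁰⁰`.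
-/

open MeasureTheory
open scoped ENNReal

/-- The closed axis-parallel square with lower-left corner `z` and side length `l`. -/
def square (z : EuclideanSpace ℝ (Fin 2)) (l : ℝ) : Set (EuclideanSpace ℝ (Fin 2)) :=
  {x | ∀ i, z i ≤ x i ∧ x i ≤ z i + l}

/-- The unit cube `[0,1)²`. -/
def unitBox : Set (EuclideanSpace ℝ (Fin 2)) := {x | ∀ i, 0 ≤ x i ∧ x i < 1}

local notation "ℝ²" => EuclideanSpace ℝ (Fin 2)

theorem EuclideanSpace.abs_sub_apply_le_dist {ι : Type*} [Fintype ι] (x y : EuclideanSpace ℝ ι)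
    (i : ι) : |x i - y i| ≤ dist x y := by
  simpa only [Real.dist_eq] using PiLp.dist_apply_le x y i

/-- `3 / 2` stands in for `√2`. -/
theorem dist_le_of_forall_abs_sub_le {x y : ℝ²} {t : ℝ} (h : ∀ i, |x i - y i| ≤ t) :
    dist x y ≤ 3 / 2 * t := by
  have ht : 0 ≤ t := (abs_nonneg _).trans (h 0)
  rw [EuclideanSpace.dist_eq, Fin.sum_univ_two, Real.dist_eq, Real.dist_eq]
  refine Real.sqrt_le_iff.mpr ⟨by positivity, ?_⟩
  have h0 := sq_le_sq' (abs_le.mp (h 0)).1 (abs_le.mp (h 0)).2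
  have h1 := sq_le_sq' (abs_le.mp (h 1)).1 (abs_le.mp (h 1)).2
  rw [sq_abs, sq_abs]
  nlinarith

def diagShift (x : ℝ²) (t : ℝ) : ℝ² := WithLp.toLp 2 fun i => x i + t

@[simp]
theorem diagShift_apply (x : ℝ²) (t : ℝ) (i : Fin 2) : diagShift x t i = x i + t := rfl

theorem unitBox_subset_square : unitBox ⊆ square 0 1 := fun x hx i => by
  simpa using And.intro (hx i).1 (hx i).2.le

theorem diagShift_half_mem_square (z : ℝ²) {l : ℝ} (hl : 0 ≤ l) :
    diagShift z (l / 2) ∈ square z l :=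
  fun i => by simp only [diagShift_apply]; constructor <;> linarith

theorem square_subset_square {z z' : ℝ²} {l l' : ℝ} (h : ∀ i, z i ≤ z' i ∧ z' i + l' ≤ z i + l) :
    square z' l' ⊆ square z l := fun x hx i =>
  ⟨(h i).1.trans (hx i).1, by linarith [(hx i).2, (h i).2]⟩

theorem dist_le_of_mem_square {z x y : ℝ²} {l : ℝ} (hx : x ∈ square z l) (hy : y ∈ square z l) :
    dist x y ≤ 3 / 2 * l :=
  dist_le_of_forall_abs_sub_le fun i =>
    abs_sub_le_iff.mpr ⟨by linarith [hx i, hy i], by linarith [hx i, hy i]⟩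

theorem dist_diagShift_half_le {z x : ℝ²} {l : ℝ} (hx : x ∈ square z l) :
    dist x (diagShift z (l / 2)) ≤ 3 / 4 * l := by
  have := dist_le_of_forall_abs_sub_le (t := l / 2) (x := x) (y := diagShift z (l / 2)) fun i =>
    abs_sub_le_iff.mpr ⟨by simp only [diagShift_apply]; linarith [hx i],
      by simp only [diagShift_apply]; linarith [hx i]⟩
  linarith

theorem closedBall_subset_square (x : ℝ²) (r : ℝ) :
    Metric.closedBall x r ⊆ square (diagShift x (-r)) (2 * r) := fun y hy i => by
  have := abs_le.mp ((EuclideanSpace.abs_sub_apply_le_dist y x i).trans hy)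
  simp only [diagShift_apply]
  constructor <;> linarith [this.1, this.2]

theorem exists_nat_lt_mem_Icc {a h t : ℝ} {N : ℕ} (hN : 0 < N) (hat : a ≤ t)
    (htN : t ≤ a + N * h) : ∃ m < N, a + m * h ≤ t ∧ t ≤ a + m * h + h := by
  induction N with
  | zero => omega
  | succ k ih =>
    by_cases hk : 0 < k ∧ t ≤ a + k * h
    · obtain ⟨m, hm, hm'⟩ := ih hk.1 hk.2
      exact ⟨m, by omega, hm'⟩
    · refine ⟨k, by omega, ?_, by push_cast at htN; linarith⟩
      rcases Nat.eq_zero_or_pos k with rfl | hk₀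
      · simpa using hat
      · linarith [not_le.mp (not_and.mp hk hk₀)]

theorem square_subset_biUnion_grid (a : ℝ²) (h : ℝ) {N : ℕ} (hN : 0 < N) :
    square a (N * h) ⊆
      ⋃ m ∈ Fintype.piFinset fun _ : Fin 2 => Finset.range N,
        square (WithLp.toLp 2 fun i => a i + m i * h) h := by
  intro x hx
  choose m hmN hm using fun i => exists_nat_lt_mem_Icc hN (hx i).1 (hx i).2
  exact Set.mem_biUnion (x := m) (by simpa using hmN) fun i => hm i

theorem grid_square_subset_square (a : ℝ²) {h : ℝ} (hh : 0 ≤ h) {N : ℕ} {m : Fin 2 → ℕ}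
    (hm : m ∈ Fintype.piFinset fun _ : Fin 2 => Finset.range N) :
    square (WithLp.toLp 2 fun i => a i + m i * h) h ⊆ square a (N * h) := by
  refine square_subset_square fun i => ⟨le_add_of_nonneg_right (by positivity), ?_⟩
  have : (m i : ℝ) + 1 ≤ N := by exact_mod_cast Finset.mem_range.mp (Fintype.mem_piFinset.mp hm i)
  nlinarith

theorem exists_le_card_mul_measureReal_inter {α ι : Type*} [MeasurableSpace α] (μ : Measure α)
    [IsFiniteMeasure μ] {F : Finset ι} (hF : F.Nonempty) {U : ι → Set α} {t : Set α}
    (ht : t ⊆ ⋃ i ∈ F, U i) : ∃ i ∈ F, μ.real t ≤ F.card * μ.real (t ∩ U i) := by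
  obtain ⟨i, hi, hmax⟩ := F.exists_max_image (fun i => μ.real (t ∩ U i)) hF
  refine ⟨i, hi, ?_⟩
  calc μ.real t ≤ μ.real (⋃ j ∈ F, t ∩ U j) := by
        rw [← Set.inter_iUnion₂]; exact measureReal_mono (Set.subset_inter subset_rfl ht)
    _ ≤ ∑ j ∈ F, μ.real (t ∩ U j) := measureReal_biUnion_finset_le F _
    _ ≤ F.card * μ.real (t ∩ U i) := by
        simpa using Finset.sum_le_card_nsmul F _ _ hmax

theorem exists_square_measureReal_le_sq_mul (μ : Measure ℝ²) [IsFiniteMeasure μ] (a : ℝ²) {h : ℝ}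
    (hh : 0 ≤ h) {N : ℕ} (hN : 0 < N) {t : Set ℝ²} (ht : t ⊆ square a (N * h)) :
    ∃ z, square z h ⊆ square a (N * h) ∧ μ.real t ≤ N ^ 2 * μ.real (t ∩ square z h) := by
  obtain ⟨m, hm, hle⟩ := exists_le_card_mul_measureReal_inter μ
    (Fintype.piFinset_nonempty.mpr fun _ => Finset.nonempty_range_iff.mpr hN.ne')
    (ht.trans (square_subset_biUnion_grid a h hN))
  refine ⟨_, grid_square_subset_square a hh hm, ?_⟩
  simpa using hle

theorem Set.diff_subset_biUnion_range_diff {α : Type*} (A : ℕ → Set α) (n : ℕ) :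
    A 0 \ A n ⊆ ⋃ k ∈ Finset.range n, A k \ A (k + 1) := by
  induction n with
  | zero => simp
  | succ n ih =>
    intro x hx
    simp only [Finset.mem_range, Set.mem_iUnion, exists_prop] at ih ⊢
    by_cases hxn : x ∈ A n
    · exact ⟨n, n.lt_succ_self, hxn, hx.2⟩
    · obtain ⟨k, hk, hxk⟩ := Set.mem_iUnion₂.mp (ih ⟨hx.1, hxn⟩)
      exact ⟨k, by omega, hxk⟩

theorem exists_measureReal_sub_le_mul_diff {α : Type*} [MeasurableSpace α] (μ : Measure α)
    [IsFiniteMeasure μ] (A : ℕ → Set α) {n : ℕ} (hn : 0 < n) :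
    ∃ k < n, μ.real (A 0) - μ.real (A n) ≤ n * μ.real (A k \ A (k + 1)) := by
  obtain ⟨k, hk, hle⟩ := exists_le_card_mul_measureReal_inter μ
    (Finset.nonempty_range_iff.mpr hn.ne') (Set.diff_subset_biUnion_range_diff A n)
  refine ⟨k, Finset.mem_range.mp hk, ?_⟩
  calc μ.real (A 0) - μ.real (A n) ≤ μ.real (A 0 \ A n) := le_measureReal_sdiff
    _ ≤ n * μ.real (A k \ A (k + 1)) := by
        rw [Finset.card_range] at hle
        exact hle.trans <| mul_le_mul_of_nonneg_left
          (measureReal_mono Set.inter_subset_right) n.cast_nonneg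

theorem div_four_le_dist_of_mem_square {z₁ z₂ b p q : ℝ²} {δ r : ℝ} (hδ : δ ≤ r / 4)
    (hb : b ∈ square z₂ (r / 32)) (hfar : r / 2 < dist b (diagShift z₁ (δ / 2)))
    (hp : p ∈ square z₁ δ) (hq : q ∈ square z₂ (r / 32)) : r / 4 ≤ dist p q := by
  have hr : 0 ≤ r := by linarith [(hb 0).1, (hb 0).2]
  have hpc := dist_diagShift_half_le hp
  have hbq := dist_le_of_mem_square hb hq
  have := dist_triangle4 b q p (diagShift z₁ (δ / 2))
  rw [dist_comm q p] at this
  linarith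

theorem mul_pow_le_pow_of_le {a b L : ℝ} {j m : ℕ} (hb : 0 ≤ b) (hbL : b ≤ L) (hjm : j ≤ m)
    (ha : a ≤ b ^ (m - j)) : a * L ^ j ≤ L ^ m := by
  have hL : 0 ≤ L := hb.trans hbL
  calc a * L ^ j ≤ b ^ (m - j) * L ^ j := by gcongr
    _ ≤ L ^ (m - j) * L ^ j := by gcongr
    _ = L ^ m := by rw [← pow_add, Nat.sub_add_cancel hjm]

theorem Real.rpow_neg_le_of_one_le_mul {L K C μ : ℝ} (hL : 0 < L) (hμ : 0 ≤ μ) (hK : K ≤ L ^ C)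
    (h : 1 ≤ K * μ) : L ^ (-C) ≤ μ := by
  have hK₀ : 0 < K := pos_of_mul_pos_left (one_pos.trans_le h) hμ
  rw [Real.rpow_neg hL.le]
  exact (inv_anti₀ hK₀ hK).trans ((inv_le_iff_one_le_mul₀' hK₀).mpr h)

section

variable (ρ : Measure ℝ²) [IsFiniteMeasure ρ]

theorem exists_square_one_le_sixteen_pow_mul (hbox : 1 ≤ ρ.real unitBox) (n : ℕ) :
    ∃ z, square z (1 / 4 ^ n) ⊆ square 0 1 ∧ 1 ≤ 16 ^ n * ρ.real (square z (1 / 4 ^ n)) := by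
  have hN : ((4 ^ n : ℕ) : ℝ) * (1 / 4 ^ n) = 1 := by push_cast; field_simp
  obtain ⟨z, hz, hle⟩ := exists_square_measureReal_le_sq_mul ρ 0 (by positivity)
    (Nat.pos_of_ne_zero (pow_ne_zero n (by norm_num))) (hN ▸ unitBox_subset_square)
  rw [hN] at hz
  refine ⟨z, hz, hbox.trans (hle.trans ?_)⟩
  have h16 : ((4 ^ n : ℕ) : ℝ) ^ 2 = 16 ^ n := by
    rw [Nat.cast_pow, ← pow_mul, mul_comm, pow_mul]; norm_num
  rw [h16]
  exact mul_le_mul_of_nonneg_left (measureReal_mono Set.inter_subset_right) (by positivity)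

theorem exists_square_one_le_mul_measureReal_annulus (x : ℝ²) {n : ℕ} (hn : 0 < n)
    (hbig : 1 ≤ ρ.real (Metric.closedBall x 2))
    (hsmall : ρ.real (Metric.closedBall x (2 / 4 ^ n)) ≤ 1 / 4) :
    ∃ r, 1 / 4 ^ n ≤ r / 4 ∧ ∃ z, square z (r / 32) ⊆ square (diagShift x (-(2 * r))) (4 * r) ∧
      1 ≤ 2 ^ 16 * n * ρ.real
        ((Metric.closedBall x (2 * r) \ Metric.closedBall x (r / 2)) ∩ square z (r / 32)) := by
  obtain ⟨k, hk, hann⟩ := exists_measureReal_sub_le_mul_diff ρ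
    (fun j => Metric.closedBall x (2 / 4 ^ j)) hn
  set r : ℝ := 1 / 4 ^ k
  have h2r : (2 : ℝ) / 4 ^ k = 2 * r := by simp only [r]; ring
  have hr2 : (2 : ℝ) / 4 ^ (k + 1) = r / 2 := by rw [pow_succ]; simp only [r]; ring
  simp only [pow_zero, div_one, h2r, hr2] at hann
  have hsq : ((128 : ℕ) : ℝ) * (r / 32) = 2 * (2 * r) := by push_cast; ring
  obtain ⟨z, hz, hle⟩ := exists_square_measureReal_le_sq_mul ρ (diagShift x (-(2 * r)))
    (by positivity) (by norm_num) (t := Metric.closedBall x (2 * r) \ Metric.closedBall x (r / 2))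
    (hsq ▸ Set.sdiff_subset.trans (closedBall_subset_square x (2 * r)))
  rw [hsq, ← mul_assoc, show (2 : ℝ) * 2 = 4 by norm_num] at hz
  refine ⟨r, ?_, z, hz, ?_⟩
  · have : (4 : ℝ) ^ (k + 1) ≤ 4 ^ n := pow_le_pow_right₀ (by norm_num) hk
    calc 1 / 4 ^ n ≤ 1 / 4 ^ (k + 1) := one_div_le_one_div_of_le (by positivity) this
      _ = r / 4 := by rw [pow_succ]; ring
  · push_cast at hle
    have : (0 : ℝ) ≤ n := n.cast_nonneg
    nlinarith

theorem exists_separated_squares_of_measureReal_closedBall_le {n : ℕ} (hn : 0 < n)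
    (hbox : 1 ≤ ρ.real unitBox)
    (hsmall : ∀ x, ρ.real (Metric.closedBall x (2 / 4 ^ n)) ≤ 1 / 4) :
    ∃ (z z₁ z₂ : ℝ²) (l l₁ l₂ : ℝ), 0 < l ∧ 0 < l₁ ∧ 0 < l₂ ∧
      square z₁ l₁ ⊆ square z l ∧ square z₂ l₂ ⊆ square z l ∧
      1 ≤ 16 ^ n * ρ.real (square z₁ l₁) ∧ 1 ≤ 2 ^ 16 * n * ρ.real (square z₂ l₂) ∧
      ∀ x ∈ square z₁ l₁, ∀ y ∈ square z₂ l₂, 1 / 16 * l ≤ dist x y := by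
  obtain ⟨z₁, hz₁, hm₁⟩ := exists_square_one_le_sixteen_pow_mul ρ hbox n
  set δ : ℝ := 1 / 4 ^ n
  set x := diagShift z₁ (δ / 2)
  have hx : x ∈ square 0 1 := hz₁ (diagShift_half_mem_square z₁ (by positivity))
  have hbig : 1 ≤ ρ.real (Metric.closedBall x 2) := hbox.trans <| measureReal_mono fun y hy => by
    have := dist_le_of_mem_square (unitBox_subset_square hy) hx
    rw [Metric.mem_closedBall]; linarith
  obtain ⟨r, hδr, z₂, hz₂, hm₂⟩ :=
    exists_square_one_le_mul_measureReal_annulus ρ x hn hbig (hsmall x)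
  have hr : 0 < r := by linarith [show 0 < δ by positivity]
  obtain ⟨b, ⟨-, hb_far⟩, hb⟩ := nonempty_of_measureReal_ne_zero (by
    intro h; rw [h] at hm₂; norm_num at hm₂)
  rw [Metric.mem_closedBall, not_le] at hb_far
  refine ⟨diagShift x (-(2 * r)), z₁, z₂, 4 * r, δ, r / 32, by positivity, by positivity,
    by positivity, square_subset_square fun i => ?_, hz₂, hm₁, ?_, fun p hp q hq => ?_⟩
  · simp only [x, diagShift_apply]
    constructor <;> linarith
  · exact hm₂.trans <| mul_le_mul_of_nonneg_left
      (measureReal_mono Set.inter_subset_right) (by positivity)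
  · have := div_four_le_dist_of_mem_square hδr hb hb_far hp hq
    linarith


theorem four_thirds_le_of_measureReal_closedBall_le {L s : ℝ} (hs : 1 ≤ s)
    (hbox : 1 ≤ ρ.real unitBox)
    (hfrost : ∀ x r, 0 < r → ρ.real (Metric.closedBall x r) ≤ L * r ^ s) : 4 / 3 ≤ L := by
  have hcover : unitBox ⊆ Metric.closedBall (diagShift 0 (1 / 2)) (3 / 4) := fun y hy => by
    simpa using dist_diagShift_half_le (unitBox_subset_square hy)
  have h₁ : 1 ≤ L * (3 / 4 : ℝ) ^ s :=
    hbox.trans ((measureReal_mono hcover).trans (hfrost _ _ (by norm_num)))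
  have h₂ : (3 / 4 : ℝ) ^ s ≤ 3 / 4 := Real.rpow_le_self_of_le_one (by norm_num) (by norm_num) hs
  have h₃ : 0 < (3 / 4 : ℝ) ^ s := by positivity
  nlinarith

theorem exists_separated_squares_of_measureReal_closedBall_le_rpow {L s : ℝ} (hs : 1 ≤ s)
    (hbox : 1 ≤ ρ.real unitBox)
    (hfrost : ∀ x r, 0 < r → ρ.real (Metric.closedBall x r) ≤ L * r ^ s) :
    ∃ (z z₁ z₂ : ℝ²) (l l₁ l₂ : ℝ), 0 < l ∧ 0 < l₁ ∧ 0 < l₂ ∧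
      square z₁ l₁ ⊆ square z l ∧ square z₂ l₂ ⊆ square z l ∧
      L ^ (-100 : ℝ) ≤ ρ.real (square z₁ l₁) ∧ L ^ (-100 : ℝ) ≤ ρ.real (square z₂ l₂) ∧
      ∀ x ∈ square z₁ l₁, ∀ y ∈ square z₂ l₂, 1 / 16 * l ≤ dist x y := by
  have hL := four_thirds_le_of_measureReal_closedBall_le ρ hs hbox hfrost
  obtain ⟨m, hm_le, hm_lt⟩ :=
    exists_nat_pow_near (x := 8 * L) (by linarith) (by norm_num : (1 : ℝ) < 4)
  have hn : (4 : ℝ) ^ (m + 1) ≤ 32 * L := by rw [pow_succ]; linarith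
  have hsmall : ∀ x, ρ.real (Metric.closedBall x (2 / 4 ^ (m + 1))) ≤ 1 / 4 := fun x => calc
    _ ≤ L * (2 / 4 ^ (m + 1)) ^ s := hfrost _ _ (by positivity)
    _ ≤ L * (2 / 4 ^ (m + 1)) := by
        gcongr
        exact Real.rpow_le_self_of_le_one (by positivity)
          ((div_le_one (by positivity)).mpr (by linarith)) hs
    _ ≤ 1 / 4 := by
        rw [mul_div_assoc', div_le_div_iff₀ (by positivity) (by norm_num)]
        linarith
  obtain ⟨z, z₁, z₂, l, l₁, l₂, hl, hl₁, hl₂, h₁, h₂, hm₁, hm₂, hsep⟩ :=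
    exists_separated_squares_of_measureReal_closedBall_le ρ m.succ_pos hbox hsmall
  refine ⟨z, z₁, z₂, l, l₁, l₂, hl, hl₁, hl₂, h₁, h₂,
    Real.rpow_neg_le_of_one_le_mul (by linarith) measureReal_nonneg ?_ hm₁,
    Real.rpow_neg_le_of_one_le_mul (by linarith) measureReal_nonneg ?_ hm₂,
    hsep⟩
  all_goals rw [show (100 : ℝ) = (100 : ℕ) by norm_num, Real.rpow_natCast]
  · calc (16 : ℝ) ^ (m + 1) = (4 ^ (m + 1)) ^ 2 := by rw [← pow_mul, mul_comm, pow_mul]; norm_num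
      _ ≤ (32 * L) ^ 2 := by gcongr
      _ = 1024 * L ^ 2 := by ring
      _ ≤ L ^ 100 := mul_pow_le_pow_of_le (by norm_num) hL (by norm_num) (by norm_num)
  · have : ((m + 1 : ℕ) : ℝ) < 4 ^ (m + 1) := by exact_mod_cast Nat.lt_pow_self (by norm_num)
    calc 2 ^ 16 * ((m + 1 : ℕ) : ℝ) ≤ 2 ^ 21 * L ^ 1 := by linarith
      _ ≤ L ^ 100 := mul_pow_le_pow_of_le (by norm_num) hL (by norm_num) (by norm_num)

end

theorem separated_squares_general (s : ℝ) (hs1 : 1 < s) :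
    ∃ c > (0 : ℝ), ∃ C > (0 : ℝ), ∀ (L : ℝ), 1 ≤ L →
      ∀ ρ : Measure (EuclideanSpace ℝ (Fin 2)), IsProbabilityMeasure ρ →
        ρ unitBoxᶜ = 0 →
        (∀ (x : EuclideanSpace ℝ (Fin 2)) (r : ℝ), 0 < r →
          ρ (Metric.closedBall x r) ≤ ENNReal.ofReal (L * r ^ s)) →
        ∃ (z z₁ z₂ : EuclideanSpace ℝ (Fin 2)) (l l₁ l₂ : ℝ),
          0 < l ∧ 0 < l₁ ∧ 0 < l₂ ∧
          square z₁ l₁ ⊆ square z l ∧ square z₂ l₂ ⊆ square z l ∧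
          ENNReal.ofReal (L ^ (-C)) ≤ ρ (square z₁ l₁) ∧
          ENNReal.ofReal (L ^ (-C)) ≤ ρ (square z₂ l₂) ∧
          ∀ x ∈ square z₁ l₁, ∀ y ∈ square z₂ l₂, c * l ≤ dist x y := by
  refine ⟨1 / 16, by norm_num, 100, by norm_num, fun L _ ρ _ hbox hfrost => ?_⟩
  have hbox' : 1 ≤ ρ.real unitBox := by
    have := measureReal_union_le (μ := ρ) unitBox unitBoxᶜ
    rwa [Set.union_compl_self, probReal_univ, (measureReal_eq_zero_iff).mpr hbox, add_zero] at this
  obtain ⟨z, z₁, z₂, l, l₁, l₂, hl, hl₁, hl₂, h₁, h₂, hm₁, hm₂, hsep⟩ :=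
    exists_separated_squares_of_measureReal_closedBall_le_rpow ρ hs1.le hbox' fun x r hr =>
      ENNReal.toReal_le_of_le_ofReal (by positivity) (hfrost x r hr)
  exact ⟨z, z₁, z₂, l, l₁, l₂, hl, hl₁, hl₂, h₁, h₂,
    (ENNReal.ofReal_le_iff_le_toReal (measure_ne_top ρ _)).mpr hm₁,
    (ENNReal.ofReal_le_iff_le_toReal (measure_ne_top ρ _)).mpr hm₂, hsep⟩

/-- Any measure with an `s`-Frostman condition (constant `L`) on `[0,1)²` has two
well-separated squares of mass `≥ L^{-O_s(1)}` inside a common square. -/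
theorem separated_squares (s : ℝ) (hs1 : 1 < s) (hs2 : s ≤ 2) :
    ∃ c > (0 : ℝ), ∃ C > (0 : ℝ), ∀ (L : ℝ), 1 ≤ L →
      ∀ ρ : Measure (EuclideanSpace ℝ (Fin 2)), IsProbabilityMeasure ρ →
        ρ unitBoxᶜ = 0 →
        (∀ (x : EuclideanSpace ℝ (Fin 2)) (r : ℝ), 0 < r →
          ρ (Metric.closedBall x r) ≤ ENNReal.ofReal (L * r ^ s)) →
        ∃ (z z₁ z₂ : EuclideanSpace ℝ (Fin 2)) (l l₁ l₂ : ℝ),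
          0 < l ∧ 0 < l₁ ∧ 0 < l₂ ∧
          square z₁ l₁ ⊆ square z l ∧ square z₂ l₂ ⊆ square z l ∧
          ENNReal.ofReal (L ^ (-C)) ≤ ρ (square z₁ l₁) ∧
          ENNReal.ofReal (L ^ (-C)) ≤ ρ (square z₂ l₂) ∧
          ∀ x ∈ square z₁ l₁, ∀ y ∈ square z₂ l₂, c * l ≤ dist x y :=
  separated_squares_general s hs1
end

section
/- There is an absolute constant C₀ > 0 such that for every K ≥ C₀ the following holds. Let ρ be a finite Borel measure on ℝ² and let Q be an axis-parallel square with ρ(Q) > 0. Suppose that there do not exist axis-parallel squares Q₁, Q₂ ⊆ Q with λ(Q₁) ≥ λ(Q)/100, λ(Q₂) ≥ λ(Q)/100, ρ(Q₁) ≥ ρ(Q)/K, ρ(Q₂) ≥ ρ(Q)/K, and dist(Q₁, Q₂) ≥ λ(Q)/100. Then Q contains an axis-parallel square Q' with λ(Q') ≤ λ(Q)/10 and ρ(Q') ≥ (1 − C₀/K)·ρ(Q). -/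
/-!
Cut `Q` into a `100 × 100` grid of cells of side `s = λ(Q)/100` and call a cell heavy if its
mass is at least `ρ(Q)/K`. Two cells whose indices differ by at least `2` in some coordinate
are `s`-separated, so by hypothesis the indices of the heavy cells differ by at most `1` in
each coordinate: all heavy cells lie in one `2 × 2` block, a square of side `λ(Q)/50`. The
at most `100²` light cells carry mass at most `100² ρ(Q)/K`, so `C₀ = 100²` works.
-/

open MeasureTheory
open scoped ENNReal

open Finset

lemma exists_window_of_pairwise_le_succ {S : Set ℕ} {n : ℕ} (hn : 2 ≤ n)
    (hS : ∀ x ∈ S, x < n) (hpair : ∀ x ∈ S, ∀ y ∈ S, x ≤ y + 1) :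
    ∃ a, a + 2 ≤ n ∧ ∀ x ∈ S, a ≤ x ∧ x ≤ a + 1 := by
  rcases S.eq_empty_or_nonempty with rfl | hne
  · exact ⟨0, hn, by simp⟩
  refine ⟨min (sInf S) (n - 2), by omega, fun x hx => ?_⟩
  have := Nat.sInf_le hx
  have := hpair x hx _ (Nat.sInf_mem hne)
  have := hS x hx
  omega

lemma exists_block_of_pairwise_le_succ {ι : Type*} {H : Set (ι → ℕ)} {n : ℕ} (hn : 2 ≤ n)
    (hH : ∀ p ∈ H, ∀ k, p k < n) (hpair : ∀ p ∈ H, ∀ q ∈ H, ∀ k, p k ≤ q k + 1) :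
    ∃ a : ι → ℕ, ∀ k, a k + 2 ≤ n ∧ ∀ p ∈ H, a k ≤ p k ∧ p k ≤ a k + 1 := by
  choose a ha using fun k => exists_window_of_pairwise_le_succ (S := (· k) '' H) hn
    (by rintro _ ⟨p, hp, rfl⟩; exact hH p hp k)
    (by rintro _ ⟨p, hp, rfl⟩ _ ⟨q, hq, rfl⟩; exact hpair p hp q hq k)
  exact ⟨a, fun k => ⟨(ha k).1, fun p hp => (ha k).2 _ ⟨p, hp, rfl⟩⟩⟩

lemma exists_nat_lt_mul_le_le_succ_mul {t s : ℝ} {N : ℕ} (hs : 0 < s) (hN : 0 < N)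
    (ht₀ : 0 ≤ t) (ht : t ≤ N * s) :
    ∃ i < N, i * s ≤ t ∧ t ≤ (i + 1) * s := by
  have hfloor : (⌊t / s⌋₊ : ℝ) * s ≤ t := (le_div_iff₀ hs).mp (Nat.floor_le (by positivity))
  have hsucc : t < (⌊t / s⌋₊ + 1) * s := (div_lt_iff₀ hs).mp (Nat.lt_floor_add_one _)
  rcases le_or_gt ⌊t / s⌋₊ (N - 1) with h | h
  · exact ⟨⌊t / s⌋₊, by omega, hfloor, hsucc.le⟩
  · refine ⟨N - 1, by omega, ?_, ?_⟩
    · calc ((N - 1 : ℕ) : ℝ) * s ≤ ⌊t / s⌋₊ * s := by gcongr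
        _ ≤ t := hfloor
    · rwa [Nat.cast_sub hN, Nat.cast_one, sub_add_cancel]

lemma ENNReal.ofReal_one_sub_div_mul_le {a b : ℝ≥0∞} {n : ℕ} {K : ℝ} (ha : a ≠ ∞)
    (hK₀ : 0 < K) (hnK : (n : ℝ) ≤ K) (h : a ≤ b + n * (a / ENNReal.ofReal K)) :
    ENNReal.ofReal (1 - n / K) * a ≤ b := by
  have hsplit : ENNReal.ofReal (n / K) * a = n * (a / ENNReal.ofReal K) := by
    rw [ENNReal.ofReal_div_of_pos hK₀, ENNReal.ofReal_natCast, div_eq_mul_inv, div_eq_mul_inv]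
    ring
  have hsum : ENNReal.ofReal (1 - n / K) * a + ENNReal.ofReal (n / K) * a = a := by
    rw [← add_mul, ← ENNReal.ofReal_add (sub_nonneg.mpr ((div_le_one hK₀).mpr hnK))
      (by positivity), sub_add_cancel, ENNReal.ofReal_one, one_mul]
  rw [← ENNReal.add_le_add_iff_right (ENNReal.mul_ne_top ENNReal.ofReal_ne_top ha), hsum, hsplit]
  exact h

lemma measure_le_add_card_mul {α ι : Type*} [MeasurableSpace α] (μ : Measure α)
    {s t : Set α} {G : Finset ι} {C : ι → Set α} {ε : ℝ≥0∞}
    (hcover : s ⊆ ⋃ i ∈ G, C i) (h : ∀ i ∈ G, C i ⊆ t ∨ μ (C i) ≤ ε) :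
    μ s ≤ μ t + #G * ε := by
  classical
  set L := G.filter fun i => ¬ C i ⊆ t
  have hsub : s ⊆ t ∪ ⋃ i ∈ L, C i := by
    intro x hx
    obtain ⟨i, hi, hxi⟩ := Set.mem_iUnion₂.mp (hcover hx)
    by_cases hit : C i ⊆ t
    · exact Or.inl (hit hxi)
    · exact Or.inr (Set.mem_iUnion₂.mpr ⟨i, mem_filter.mpr ⟨hi, hit⟩, hxi⟩)
  have hlight : ∀ i ∈ L, μ (C i) ≤ ε := fun i hi =>
    ((h i (mem_filter.mp hi).1).resolve_left (mem_filter.mp hi).2)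
  calc μ s ≤ μ t + ∑ i ∈ L, μ (C i) :=
        (measure_mono hsub).trans <| (measure_union_le _ _).trans <| by
          gcongr; exact measure_biUnion_finset_le _ _
    _ ≤ μ t + #L * ε := by
        gcongr
        simpa only [nsmul_eq_mul] using sum_le_card_nsmul L _ ε hlight
    _ ≤ μ t + #G * ε := by gcongr; exact filter_subset _ _

lemma square_subset_square_s15 {z w : EuclideanSpace ℝ (Fin 2)} {l s : ℝ}
    (h : ∀ k, z k ≤ w k ∧ w k + s ≤ z k + l) : square w s ⊆ square z l :=
  fun _ hx k => ⟨(h k).1.trans (hx k).1, (hx k).2.trans (h k).2⟩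

lemma le_dist_of_mem_square {w w' x y : EuclideanSpace ℝ (Fin 2)} {s s' d : ℝ} (k : Fin 2)
    (hx : x ∈ square w s) (hy : y ∈ square w' s') (hsep : w k + s + d ≤ w' k) :
    d ≤ dist x y := by
  calc d ≤ y k - x k := by linarith [(hx k).2, (hy k).1]
    _ ≤ dist (x k) (y k) := by rw [Real.dist_eq, abs_sub_comm]; exact le_abs_self _
    _ ≤ dist x y := PiLp.dist_apply_le x y k

def gridCorner (z : EuclideanSpace ℝ (Fin 2)) (s : ℝ) (p : Fin 2 → ℕ) :
    EuclideanSpace ℝ (Fin 2) :=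
  WithLp.toLp 2 fun k => z k + s * p k

def gridCell (z : EuclideanSpace ℝ (Fin 2)) (s : ℝ) (p : Fin 2 → ℕ) :
    Set (EuclideanSpace ℝ (Fin 2)) :=
  square (gridCorner z s p) s

section Grid

variable {z : EuclideanSpace ℝ (Fin 2)} {s : ℝ}

@[simp]
lemma gridCorner_apply (p : Fin 2 → ℕ) (k : Fin 2) : gridCorner z s p k = z k + s * p k := rfl

@[simp]
lemma gridCorner_zero : gridCorner z s 0 = z := by
  ext k; simp

lemma square_gridCorner_subset (hs : 0 ≤ s) {p a : Fin 2 → ℕ} {m n : ℕ}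
    (h : ∀ k, a k ≤ p k ∧ p k + m ≤ a k + n) :
    square (gridCorner z s p) (m * s) ⊆ square (gridCorner z s a) (n * s) := by
  refine square_subset_square_s15 fun k => ?_
  have hlo : (a k : ℝ) ≤ p k := by exact_mod_cast (h k).1
  have hhi : (p k : ℝ) + m ≤ a k + n := by exact_mod_cast (h k).2
  simp only [gridCorner_apply]
  constructor <;> nlinarith

lemma gridCell_subset (hs : 0 ≤ s) {p a : Fin 2 → ℕ} {n : ℕ}
    (h : ∀ k, a k ≤ p k ∧ p k + 1 ≤ a k + n) :
    gridCell z s p ⊆ square (gridCorner z s a) (n * s) := by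
  simpa [gridCell] using square_gridCorner_subset (m := 1) hs h

lemma exists_mem_gridCell (hs : 0 < s) {N : ℕ} (hN : 0 < N)
    {x : EuclideanSpace ℝ (Fin 2)} (hx : x ∈ square z (N * s)) :
    ∃ p ∈ Fintype.piFinset fun _ => range N, x ∈ gridCell z s p := by
  choose p hpN hp using fun k =>
    exists_nat_lt_mul_le_le_succ_mul hs hN (sub_nonneg.mpr (hx k).1) (by linarith [(hx k).2])
  refine ⟨p, Fintype.mem_piFinset.mpr fun k => mem_range.mpr (hpN k), fun k => ?_⟩
  simp only [gridCorner_apply]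
  constructor <;> linarith [(hp k).1, (hp k).2]

lemma le_dist_of_mem_gridCell (hs : 0 ≤ s) {p q : Fin 2 → ℕ} {k : Fin 2}
    (hpq : p k + 2 ≤ q k) {x y : EuclideanSpace ℝ (Fin 2)}
    (hx : x ∈ gridCell z s p) (hy : y ∈ gridCell z s q) :
    s ≤ dist x y := by
  refine le_dist_of_mem_square k hx hy ?_
  have : (p k : ℝ) + 2 ≤ q k := by exact_mod_cast hpq
  simp only [gridCorner_apply]
  nlinarith

lemma exists_square_measure_ge_of_not_separated (ρ : Measure (EuclideanSpace ℝ (Fin 2)))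
    [IsFiniteMeasure ρ] {N : ℕ} (hN : 2 ≤ N) (hs : 0 < s) {K : ℝ} (hK : (N : ℝ) ^ 2 ≤ K)
    (hno : ∀ z₁ z₂, square z₁ s ⊆ square z (N * s) → square z₂ s ⊆ square z (N * s) →
      ρ (square z (N * s)) / ENNReal.ofReal K ≤ ρ (square z₁ s) →
      ρ (square z (N * s)) / ENNReal.ofReal K ≤ ρ (square z₂ s) →
      ∃ x ∈ square z₁ s, ∃ y ∈ square z₂ s, dist x y < s) :
    ∃ z', square z' (2 * s) ⊆ square z (N * s) ∧
      ENNReal.ofReal (1 - N ^ 2 / K) * ρ (square z (N * s)) ≤ ρ (square z' (2 * s)) := by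
  have hQ : square z (N * s) = square (gridCorner z s 0) (N * s) := by rw [gridCorner_zero]
  set G := Fintype.piFinset fun _ : Fin 2 => range N
  have hG : ∀ p ∈ G, ∀ k, p k < N := fun p hp k => mem_range.mp (Fintype.mem_piFinset.mp hp k)
  have hcell : ∀ p ∈ G, gridCell z s p ⊆ square z (N * s) := fun p hp => hQ ▸
    gridCell_subset hs.le fun k => ⟨Nat.zero_le _, by rw [Pi.zero_apply]; linarith [hG p hp k]⟩
  set ε := ρ (square z (N * s)) / ENNReal.ofReal K
  set H := {p | p ∈ G ∧ ε ≤ ρ (gridCell z s p)}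
  have hclose : ∀ p ∈ H, ∀ q ∈ H, ∀ k, p k ≤ q k + 1 := by
    rintro p ⟨hpG, hp⟩ q ⟨hqG, hq⟩ k
    by_contra! hfar
    obtain ⟨x, hx, y, hy, hxy⟩ := hno _ _ (hcell q hqG) (hcell p hpG) hq hp
    exact hxy.not_ge (le_dist_of_mem_gridCell hs.le hfar hx hy)
  obtain ⟨a, ha⟩ := exists_block_of_pairwise_le_succ hN (fun p hp => hG p hp.1) hclose
  refine ⟨gridCorner z s a, ?_, ?_⟩
  · rw [hQ]
    exact_mod_cast square_gridCorner_subset (m := 2) hs.le fun k =>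
      ⟨Nat.zero_le _, by have := (ha k).1; omega⟩
  have hcard : #G = N ^ 2 := by simp [G]
  have hmass :
      ρ (square z (N * s)) ≤ ρ (square (gridCorner z s a) (2 * s)) + (N ^ 2 : ℕ) * ε := by
    rw [← hcard]
    refine measure_le_add_card_mul (C := gridCell z s) ρ (fun x hx => ?_) fun p hpG => ?_
    · obtain ⟨p, hp, hxp⟩ := exists_mem_gridCell hs (by omega) hx
      exact Set.mem_iUnion₂.mpr ⟨p, hp, hxp⟩
    · by_cases hheavy : ε ≤ ρ (gridCell z s p)
      · left
        exact_mod_cast gridCell_subset (n := 2) hs.le fun k => by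
          have := (ha k).2 p ⟨hpG, hheavy⟩; omega
      · exact Or.inr (not_le.mp hheavy).le
  simpa only [Nat.cast_pow] using ENNReal.ofReal_one_sub_div_mul_le (measure_ne_top _ _)
    (lt_of_lt_of_le (by positivity) hK) (by push_cast; exact hK) hmass

end Grid

/-- If a square `Q` of positive mass admits no pair of well-separated sub-squares of
side `≥ λ(Q)/100` and mass `≥ ρ(Q)/K`, then almost all of its mass concentrates in a
sub-square of side `≤ λ(Q)/10`. -/
theorem bad_square_concentration :
    ∃ C₀ > (0 : ℝ), ∀ K : ℝ, C₀ ≤ K →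
      ∀ ρ : Measure (EuclideanSpace ℝ (Fin 2)), IsFiniteMeasure ρ →
      ∀ (z : EuclideanSpace ℝ (Fin 2)) (l : ℝ), 0 < l → 0 < ρ (square z l) →
      (¬ ∃ (z₁ z₂ : EuclideanSpace ℝ (Fin 2)) (l₁ l₂ : ℝ),
          l / 100 ≤ l₁ ∧ l / 100 ≤ l₂ ∧
          square z₁ l₁ ⊆ square z l ∧ square z₂ l₂ ⊆ square z l ∧
          ρ (square z l) / ENNReal.ofReal K ≤ ρ (square z₁ l₁) ∧
          ρ (square z l) / ENNReal.ofReal K ≤ ρ (square z₂ l₂) ∧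
          ∀ x ∈ square z₁ l₁, ∀ y ∈ square z₂ l₂, l / 100 ≤ dist x y) →
      ∃ (z' : EuclideanSpace ℝ (Fin 2)) (l' : ℝ), 0 < l' ∧ l' ≤ l / 10 ∧
        square z' l' ⊆ square z l ∧
        ENNReal.ofReal (1 - C₀ / K) * ρ (square z l) ≤ ρ (square z' l') := by
  refine ⟨((100 : ℕ) : ℝ) ^ 2, by positivity, fun K hK ρ _ z l hl _ hno => ?_⟩
  set s := l / 100
  have hQ : square z l = square z ((100 : ℕ) * s) := by congr 1; push_cast; ring
  obtain ⟨z', hsub, hmass⟩ := exists_square_measure_ge_of_not_separated (z := z) (s := s) ρ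
    (by norm_num) (by positivity) hK fun z₁ z₂ h₁ h₂ hm₁ hm₂ => by
      by_contra! hfar
      rw [← hQ] at h₁ h₂ hm₁ hm₂
      exact hno ⟨z₁, z₂, s, s, le_rfl, le_rfl, h₁, h₂, hm₁, hm₂, hfar⟩
  rw [← hQ] at hsub hmass
  exact ⟨z', 2 * s, by positivity, by simp only [s]; linarith, hsub, hmass⟩
end

section
/- Let φ(u) = (29 + 19u + 6u² + 8u³ − 8u⁴)/(42 − 15u + 30u² − 12u³). Then φ(s−1) > (4/3)s − 2/3 for every s ∈ (1, 1.037). -/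
/-- The function `φ` from the paper. -/
noncomputable def phi (u : ℝ) : ℝ :=
  (29 + 19 * u + 6 * u ^ 2 + 8 * u ^ 3 - 8 * u ^ 4) /
    (42 - 15 * u + 30 * u ^ 2 - 12 * u ^ 3)

theorem phi_gt_liu : ∀ s : ℝ, 1 < s → s < 1.037 → (4 / 3) * s - 2 / 3 < phi (s - 1) := by
  intro s h1 h2
  unfold phi
  set u : ℝ := s - 1 with hu
  have hu0 : 0 < u := by simp [hu]; linarith
  have hu1 : u < 0.037 := by simp [hu]; linarith
  have hden : 0 < 42 - 15 * u + 30 * u ^ 2 - 12 * u ^ 3 := by nlinarith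
  rw [lt_div_iff₀ hden]
  have hs : s = u + 1 := by simp [hu]
  rw [hs]
  nlinarith [sq_nonneg u, pow_pos hu0 2, pow_pos hu0 3, pow_pos hu0 4, sq_nonneg (u - 0.037)]
end
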